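/- (Characterization of MAD codes) Let C be a q-ary code of length n whose size M = |C| is a multiple of q with M ≤ q^n. Then C is an (n, q, M)-MAD code (i.e., D(C) ≥ D(C') for every code C' ⊆ (Fin q)^n with |C'| = M) if and only if x_{i,j} = 1/q for every coordinate i ∈ {1,…,n} and every symbol j ∈ Fin q. -/

import Mathlib

/-!
Counting agreeing pairs coordinatewise, with `N i j = #{c ∈ C | c i = j}` and `M = #C`,
`∑_{x,y ∈ C} d(x,y) = ∑ᵢ (M² - ∑ⱼ (N i j)²)`, and `∑ⱼ (N i j)² = M²/q + ∑ⱼ (N i j - M/q)²`.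
So the distance sum is `n (M² - M²/q)` minus a sum of squares which vanishes exactly when all
frequencies are `1/q`. If `q ∣ M ≤ qⁿ`, that bound is attained: for any set `T` of `M/q` words
of length `n - 1`, the words `(b, w₁ + b, …, w_{n-1} + b)` with `b` a symbol and `w ∈ T` form
such a code.
-/

open Finset

section PairCounting

variable {ι α : Type*} [Fintype α] [DecidableEq α]

theorem sum_sum_ite_apply_eq (S : Finset (ι → α)) (i : ι) :
    ∑ x ∈ S, ∑ y ∈ S, (if x i = y i then 1 else 0) = ∑ j, #{c ∈ S | c i = j} ^ 2 := by
  rw [← S.sum_fiberwise (· i)]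
  refine sum_congr rfl fun j _ => ?_
  rw [sq, ← smul_eq_mul, ← sum_const]
  refine sum_congr rfl fun x hx => ?_
  simp only [(mem_filter.1 hx).2, card_filter, eq_comm]

-- Stated additively so that no truncated subtraction occurs.
theorem sum_sum_hammingDist_add_sum_sum_sq [Fintype ι] (S : Finset (ι → α)) :
    ∑ x ∈ S, ∑ y ∈ S, hammingDist x y + ∑ i, ∑ j, #{c ∈ S | c i = j} ^ 2 =
      Fintype.card ι * #S ^ 2 := by
  have agree (x y : ι → α) :
      hammingDist x y + ∑ i, (if x i = y i then 1 else 0) = Fintype.card ι := by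
    rw [← card_filter, add_comm, hammingDist, card_filter_add_card_filter_not, card_univ]
  calc _ = ∑ x ∈ S, ∑ y ∈ S, (hammingDist x y + ∑ i, (if x i = y i then 1 else 0)) := by
        simp only [← sum_sum_ite_apply_eq, sum_add_distrib]
        rw [sum_comm (s := univ)]
        simp only [sum_comm (s := univ) (t := S)]
    _ = Fintype.card ι * #S ^ 2 := by
        simp only [agree, sum_const, smul_eq_mul]
        ring

end PairCounting

theorem sum_sq_eq_sq_sum_div_add_sum_sq_sub {α : Type*} [Fintype α] [Nonempty α] (f : α → ℝ) :
    ∑ j, f j ^ 2 = (∑ j, f j) ^ 2 / Fintype.card α +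
      ∑ j, (f j - (∑ k, f k) / Fintype.card α) ^ 2 := by
  have hcard : (Fintype.card α : ℝ) ≠ 0 := by positivity
  simp only [sub_sq, sum_add_distrib, sum_sub_distrib, ← mul_sum, ← sum_mul, sum_const, card_univ,
    nsmul_eq_mul]
  field_simp
  ring

section AverageDistance

variable {ι α : Type*} [Fintype ι] [Fintype α] [Nonempty α] [DecidableEq α]

theorem sum_sum_hammingDist_eq (S : Finset (ι → α)) :
    ∑ x ∈ S, ∑ y ∈ S, (hammingDist x y : ℝ) =
      Fintype.card ι * (#S ^ 2 - #S ^ 2 / Fintype.card α) -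
        ∑ i, ∑ j, ((#{c ∈ S | c i = j} : ℝ) - #S / Fintype.card α) ^ 2 := by
  have hsum (i : ι) : ∑ j, (#{c ∈ S | c i = j} : ℝ) = #S := by
    exact_mod_cast (card_eq_sum_card_fiberwise fun (x : ι → α) _ => mem_univ (x i)).symm
  have hsq (i : ι) : ∑ j, (#{c ∈ S | c i = j} : ℝ) ^ 2 = #S ^ 2 / Fintype.card α +
      ∑ j, ((#{c ∈ S | c i = j} : ℝ) - #S / Fintype.card α) ^ 2 := by
    rw [sum_sq_eq_sq_sum_div_add_sum_sq_sub, hsum]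
  have hcast := congrArg (Nat.cast : ℕ → ℝ) (sum_sum_hammingDist_add_sum_sum_sq S)
  push_cast at hcast
  simp only [hsq, sum_add_distrib, sum_const, card_univ, nsmul_eq_mul] at hcast
  linarith

theorem sum_sum_hammingDist_le (S : Finset (ι → α)) :
    ∑ x ∈ S, ∑ y ∈ S, (hammingDist x y : ℝ) ≤
      Fintype.card ι * (#S ^ 2 - #S ^ 2 / Fintype.card α) := by
  rw [sum_sum_hammingDist_eq, sub_le_self_iff]
  positivity

theorem le_sum_sum_hammingDist_iff (S : Finset (ι → α)) :
    Fintype.card ι * (#S ^ 2 - #S ^ 2 / Fintype.card α) ≤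
        ∑ x ∈ S, ∑ y ∈ S, (hammingDist x y : ℝ) ↔
      ∀ i j, (#{c ∈ S | c i = j} : ℝ) = #S / Fintype.card α := by
  rw [sum_sum_hammingDist_eq, le_sub_self_iff, LE.le.ge_iff_eq' (by positivity),
    Fintype.sum_eq_zero_iff_of_nonneg fun i => by positivity]
  simp only [funext_iff, Pi.zero_apply, Fintype.sum_eq_zero_iff_of_nonneg fun _ => sq_nonneg _,
    pow_eq_zero_iff two_ne_zero, sub_eq_zero]

end AverageDistance

section UniformCode

variable {α : Type*} [AddCommGroup α]

theorem cons_zero_add_const_injective {n : ℕ} :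
    Function.Injective fun p : α × (Fin n → α) =>
      (Fin.cons 0 p.2 : Fin (n + 1) → α) + Function.const _ p.1 := by
  rintro ⟨b, w⟩ ⟨b', w'⟩ h
  have hb : b = b' := by simpa using congrFun h 0
  subst hb
  ext k
  · rfl
  · simpa using congrFun h k.succ

variable [Fintype α] [DecidableEq α]

theorem exists_uniform_code_of_dvd {n M : ℕ} (hn : 0 < n) (hdvd : Fintype.card α ∣ M)
    (hle : M ≤ Fintype.card α ^ n) :
    ∃ S : Finset (Fin n → α), #S = M ∧ ∀ i j, #{c ∈ S | c i = j} * Fintype.card α = M := by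
  obtain ⟨n, rfl⟩ := Nat.exists_eq_add_one_of_ne_zero hn.ne'
  obtain ⟨m, rfl⟩ := hdvd
  have hm : m ≤ #(univ : Finset (Fin n → α)) := by
    rw [pow_succ'] at hle
    simpa using Nat.le_of_mul_le_mul_left hle Fintype.card_pos
  obtain ⟨T, -, hT⟩ := exists_subset_card_eq hm
  set F := fun p : α × (Fin n → α) => (Fin.cons 0 p.2 : Fin (n + 1) → α) + Function.const _ p.1
  refine ⟨(univ ×ˢ T).image F, ?_, fun i j => ?_⟩
  · rw [card_image_of_injective _ cons_zero_add_const_injective, card_product, card_univ, hT]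
  · have hfiber : {p ∈ (univ : Finset α) ×ˢ T | F p i = j} =
        T.image fun w => (j - (Fin.cons 0 w : Fin (n + 1) → α) i, w) := by
      ext ⟨b, w⟩
      simp only [mem_filter, mem_product, mem_univ, true_and, mem_image, Prod.mk.injEq]
      constructor
      · rintro ⟨hw, rfl⟩
        exact ⟨w, hw, by simp [F], rfl⟩
      · rintro ⟨w, hw, rfl, rfl⟩
        exact ⟨hw, by simp [F]⟩
    rw [filter_image, card_image_of_injective _ cons_zero_add_const_injective, hfiber,
      card_image_of_injective _ fun w w' h => (Prod.ext_iff.1 h).2, hT, mul_comm]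

end UniformCode

theorem mad_code_iff_uniform_freq_general (q n : ℕ) (hn : 1 ≤ n)
    (C : Finset (Fin n → Fin q)) (hC : C.Nonempty)
    (hdvd : q ∣ C.card) (hle : C.card ≤ q ^ n) :
    (∀ C' : Finset (Fin n → Fin q), C'.card = C.card →
        (1 / (C'.card : ℝ) ^ 2) * ∑ x ∈ C', ∑ y ∈ C', (hammingDist x y : ℝ) ≤
          (1 / (C.card : ℝ) ^ 2) * ∑ x ∈ C, ∑ y ∈ C, (hammingDist x y : ℝ)) ↔
      ∀ (i : Fin n) (j : Fin q),
        ((C.filter fun c => c i = j).card : ℝ) / (C.card : ℝ) = 1 / (q : ℝ) := by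
  have hM : (#C : ℝ) ≠ 0 := by exact_mod_cast hC.card_pos.ne'
  have : NeZero q := ⟨(Nat.pos_of_dvd_of_pos hdvd hC.card_pos).ne'⟩
  obtain ⟨S, hS, hS_unif⟩ :=
    exists_uniform_code_of_dvd (α := Fin q) hn (by simpa using hdvd) (by simpa using hle)
  have hS_sum := le_antisymm (sum_sum_hammingDist_le S) <|
    (le_sum_sum_hammingDist_iff S).2 fun i j => by
      rw [eq_div_iff (by simp [NeZero.ne])]
      exact_mod_cast hS ▸ hS_unif i j
  rw [hS] at hS_sum
  have hmad : (∀ C' : Finset (Fin n → Fin q), #C' = #C →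
        (1 / (#C' : ℝ) ^ 2) * ∑ x ∈ C', ∑ y ∈ C', (hammingDist x y : ℝ) ≤
          (1 / (#C : ℝ) ^ 2) * ∑ x ∈ C, ∑ y ∈ C, (hammingDist x y : ℝ)) ↔
      ∑ x ∈ S, ∑ y ∈ S, (hammingDist x y : ℝ) ≤ ∑ x ∈ C, ∑ y ∈ C, (hammingDist x y : ℝ) := by
    refine ⟨fun h => ?_, fun h C' hC' => ?_⟩
    · exact le_of_mul_le_mul_left (by simpa only [hS] using h S hS) (by positivity)
    · rw [hC']
      gcongr
      exact (sum_sum_hammingDist_le C').trans (by rw [hC', ← hS_sum]; exact h)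
  rw [hmad, hS_sum, le_sum_sum_hammingDist_iff, Fintype.card_fin]
  refine forall₂_congr fun i j => ?_
  field_simp

/-- **Characterization of MAD codes.** Let `C` be a `q`-ary code of
length `n` whose size `M = |C|` is a multiple of `q` with `M ≤ q^n`. Then `C` is an
`(n, q, M)`-MAD code (i.e., `D(C) ≥ D(C')` for every code `C' ⊆ (Fin q)ⁿ` with
`|C'| = M`) if and only if `x_{i,j} = 1/q` for every coordinate `i` and symbol `j`. -/
theorem mad_code_iff_uniform_freq (q n : ℕ) (hq : 2 ≤ q) (hn : 1 ≤ n)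
    (C : Finset (Fin n → Fin q)) (hC : C.Nonempty)
    (hdvd : q ∣ C.card) (hle : C.card ≤ q ^ n) :
    (∀ C' : Finset (Fin n → Fin q), C'.card = C.card →
        (1 / (C'.card : ℝ) ^ 2) * ∑ x ∈ C', ∑ y ∈ C', (hammingDist x y : ℝ) ≤
          (1 / (C.card : ℝ) ^ 2) * ∑ x ∈ C, ∑ y ∈ C, (hammingDist x y : ℝ)) ↔
      ∀ (i : Fin n) (j : Fin q),
        ((C.filter fun c => c i = j).card : ℝ) / (C.card : ℝ) = 1 / (q : ℝ) :=
  mad_code_iff_uniform_freq_general q n hn C hC hdvd hle
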